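/- Let 2 ≤ K ≤ 4 and c < 1/2. Define L(T) = (K-T)/4 for T ∈ [0, K/2] and L(T) = (1/4)[T(2c-1) + K(1-c)] for T ∈ [K/2, 2]. Then L is strictly decreasing on [0,2], the unique minimizer is T* = 2, and the minimum loss is (1/4)[K - 2 + c(4 - K)]. -/
import Mathlib


/-- The two-piece expected loss on `[0,2]` for `2 ≤ K ≤ 4`. -/
noncomputable def twoPieceLoss (K c T : ℝ) : ℝ :=
  if T ≤ K / 2 then (K - T) / 4 else (T * (2 * c - 1) + K * (1 - c)) / 4

/-- for `2 ≤ K ≤ 4` and `c < 1/2`, the loss is strictly decreasing on `[0,2]`,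
the unique minimizer is `T* = 2`, and the minimum loss is `(1/4)[K - 2 + c(4 - K)]`. -/
theorem optimal_threshold_mid_K (K c : ℝ) (hK1 : 2 ≤ K) (hK2 : K ≤ 4)
    (hc0 : 0 ≤ c) (hc : c < 1 / 2) :
    StrictAntiOn (twoPieceLoss K c) (Set.Icc (0 : ℝ) 2) ∧
    (∀ T ∈ Set.Icc (0 : ℝ) 2, twoPieceLoss K c 2 ≤ twoPieceLoss K c T ∧
      (twoPieceLoss K c T = twoPieceLoss K c 2 → T = 2)) ∧
    twoPieceLoss K c 2 = (1 / 4) * (K - 2 + c * (4 - K)) := by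
  have hanti : StrictAntiOn (twoPieceLoss K c) (Set.Icc (0 : ℝ) 2) := by
    intro a ha b hb hab
    simp only [twoPieceLoss]
    split_ifs with h1 h2 h2 <;>
      nlinarith [ha.1, ha.2, hb.1, hb.2, mul_nonneg (by linarith : (0:ℝ) ≤ b - a) hc0,
        mul_pos (sub_pos.mpr hab) (by linarith : (0:ℝ) < 1 - 2 * c)]
  refine ⟨hanti, ?_, ?_⟩
  · intro T hT
    rcases eq_or_lt_of_le hT.2 with h | h
    · subst h; exact ⟨le_rfl, fun _ => rfl⟩
    · have := hanti hT (by norm_num) h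
      exact ⟨this.le, fun he => absurd he (by linarith)⟩
  · simp only [twoPieceLoss]
    split_ifs with h <;> nlinarith
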